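/- Let ρ be the ReLU activation function. There exist absolute constants C₁, C₂ > 0 such that for every neural network Φ with d-dimensional input, L = L(Φ) layers, N = N(Φ) neurons and M = M(Φ) nonzero weights, there is a standard neural network Φ_st with d-dimensional input and L layers, at most C₁·L·N neurons and at most C₂·(L·N + M) nonzero weights, such that R_ρ(Φ)(x) = R_ρ(Φ_st)(x) for all x ∈ ℝ^d. -/

import Mathlib

noncomputable section

open Finset

/-- The ReLU activation function `x ↦ max 0 x`. -/
def relu (x : ℝ) : ℝ := max 0 x

/-- A feedforward neural network with possible skip connections.
The entry `A l k i j` is the weight connecting neuron `j` of layer `k` to neuron `i` of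
layer `l` (meaningful for `1 ≤ l ≤ L`, `k < l`, `i < arity l`, `j < arity k`), and
`b l i` is the bias of neuron `i` of layer `l`.  Entries outside the meaningful ranges
are irrelevant: they influence neither the realization nor the complexity counts. -/
structure NN where
  d : ℕ
  L : ℕ
  hL : 0 < L
  arity : ℕ → ℕ
  harity : arity 0 = d
  A : ℕ → ℕ → ℕ → ℕ → ℝ
  b : ℕ → ℕ → ℝ

namespace NN

/-- The vector of neuron values at layer `l`; layer `0` is the (truncated) input, and
for `l ≥ 1` the activation `ρ` is applied componentwise. -/
def hidden (Φ : NN) (ρ : ℝ → ℝ) (x : ℕ → ℝ) : ℕ → ℕ → ℝ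
  | 0 => fun i => if i < Φ.d then x i else 0
  | l + 1 => fun i =>
      ρ ((∑ k : Fin (l + 1), ∑ j ∈ Finset.range (Φ.arity k),
        Φ.A (l + 1) k i j * Φ.hidden ρ x k j) + Φ.b (l + 1) i)
  termination_by l => l
  decreasing_by exact k.isLt

/-- The realization `R_ρ(Φ)` of the network `Φ` with activation function `ρ`:
no activation is applied in the last layer `L`. -/
def realize (Φ : NN) (ρ : ℝ → ℝ) (x : ℕ → ℝ) : ℕ → ℝ := fun i =>
  (∑ k : Fin Φ.L, ∑ j ∈ Finset.range (Φ.arity k),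
    Φ.A Φ.L k i j * Φ.hidden ρ x k j) + Φ.b Φ.L i

/-- The output dimension `N_L` of a network. -/
def outDim (Φ : NN) : ℕ := Φ.arity Φ.L

/-- The number of neurons `N(Φ) = d + N_1 + … + N_L`. -/
def numNeurons (Φ : NN) : ℕ := ∑ l ∈ Finset.range (Φ.L + 1), Φ.arity l

/-- The number of nonzero weights `M(Φ)`. -/
def numWeights (Φ : NN) : ℕ :=
  ∑ l ∈ Finset.Icc 1 Φ.L,
    ((∑ k ∈ Finset.range l,
        {p : ℕ × ℕ | p.1 < Φ.arity l ∧ p.2 < Φ.arity k ∧ Φ.A l k p.1 p.2 ≠ 0}.ncard) +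
      {i : ℕ | i < Φ.arity l ∧ Φ.b l i ≠ 0}.ncard)

/-- A standard neural network: only neurons in neighboring layers are connected. -/
def IsStandard (Φ : NN) : Prop :=
  ∀ l k, l ≤ Φ.L → k + 2 ≤ l → ∀ i j, i < Φ.arity l → j < Φ.arity k → Φ.A l k i j = 0

/-- A neural network architecture: a network all of whose entries are `0` or `1`. -/
def IsArchitecture (𝒜 : NN) : Prop :=
  (∀ l k i j, 𝒜.A l k i j = 0 ∨ 𝒜.A l k i j = 1) ∧ ∀ l i, 𝒜.b l i = 0 ∨ 𝒜.b l i = 1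

/-- `Φ` has architecture `𝒜`: same layer dimensions, and nonzero entries of `Φ` occur
only at positions where `𝒜` is nonzero. -/
def HasArchitecture (Φ 𝒜 : NN) : Prop :=
  Φ.d = 𝒜.d ∧ Φ.L = 𝒜.L ∧ (∀ l, Φ.arity l = 𝒜.arity l) ∧
    (∀ l k i j, Φ.A l k i j ≠ 0 → 𝒜.A l k i j ≠ 0) ∧
    (∀ l i, Φ.b l i ≠ 0 → 𝒜.b l i ≠ 0)

end NN

/-- Embedding of `ℝ^d` into the input signals `ℕ → ℝ` of a network. -/
def embed (d : ℕ) (x : Fin d → ℝ) : ℕ → ℝ := fun i => if h : i < d then x ⟨i, h⟩ else 0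

/-- The unit cube `[0,1]^d`. -/
def cube (d : ℕ) : Set (Fin d → ℝ) := {x | ∀ i, x i ∈ Set.Icc (0 : ℝ) 1}

/-- The piecewise linear bump function `ψ`. -/
def bump (x : ℝ) : ℝ := if |x| < 1 then 1 else if |x| ≤ 2 then 2 - |x| else 0

/-- The partition-of-unity function `φ_m(x) = ∏_l ψ(3N(x_l − m_l/N))`. -/
def pou (d N : ℕ) (m : Fin d → ℕ) (x : Fin d → ℝ) : ℝ :=
  ∏ l, bump (3 * N * (x l - m l / N))

/-- The polynomial `x ↦ ∑_{|α| ≤ n−1} c_α x^α` with coefficients `c`. -/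
def poly (d n : ℕ) (c : (Fin d → Fin n) → ℝ) (x : Fin d → ℝ) : ℝ :=
  ∑ α ∈ Finset.univ.filter (fun α : Fin d → Fin n => (∑ l, (α l : ℕ)) ≤ n - 1),
    c α * ∏ l, x l ^ (α l : ℕ)

/-- The partial derivative in the `i`-th coordinate direction. -/
def pderivAt {d : ℕ} (i : Fin d) (f : (Fin d → ℝ) → ℝ) : (Fin d → ℝ) → ℝ :=
  fun x => fderiv ℝ f x (Pi.single i 1)

/-- Iterated partial derivative `D^α f` along a list of coordinate directions. -/
def pdList {d : ℕ} : List (Fin d) → ((Fin d → ℝ) → ℝ) → ((Fin d → ℝ) → ℝ)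
  | [], f => f
  | i :: t, f => pdList t (pderivAt i f)

/-- `f` lies in the `W^{n,∞}`-ball of radius `B` on `[0,1]^d`: it is `(n−1)`-times
continuously differentiable on an open set containing the cube, all partial derivatives
of order `≤ n−1` are bounded by `B` on the cube, and those of order `n−1` are
`B`-Lipschitz on the cube with respect to the Euclidean norm. -/
def InWBall (d n : ℕ) (B : ℝ) (f : (Fin d → ℝ) → ℝ) : Prop :=
  (∃ U : Set (Fin d → ℝ), IsOpen U ∧ cube d ⊆ U ∧ ContDiffOn ℝ (n - 1 : ℕ) f U) ∧
    (∀ l : List (Fin d), l.length ≤ n - 1 → ∀ x ∈ cube d, |pdList l f x| ≤ B) ∧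
    (∀ l : List (Fin d), l.length = n - 1 → ∀ x ∈ cube d, ∀ y ∈ cube d,
      |pdList l f x - pdList l f y| ≤ B * Real.sqrt (∑ i, (x i - y i) ^ 2))

/-!
Layer `t` of the standard network stores, for every neuron of layers `0, …, t` of `Φ` with value
`v`, the pair `relu v, relu (-v)`. Since `v = relu v - relu (-v)`, every pre-activation of `Φ` at
layer `t + 1` is an affine function of layer `t` alone, and the pair is passed on to layer `t + 1` as
`relu (±(relu v - relu (-v)))`. So each layer has at most `2N` neurons; a copied neuron has at most
two incoming weights, and a new one at most twice as many as the neuron of `Φ` it reproduces.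
-/

lemma Finset.sum_range_two_mul {M : Type*} [AddCommMonoid M] (n : ℕ) (f : ℕ → M) :
    ∑ j ∈ range (2 * n), f j = ∑ g ∈ range n, (f (2 * g) + f (2 * g + 1)) := by
  induction n with
  | zero => simp
  | succ n ih => rw [mul_add, mul_one, sum_range_succ, sum_range_succ, sum_range_succ, ih, add_assoc]

lemma relu_nonneg (a : ℝ) : 0 ≤ relu a := le_max_left 0 a

lemma relu_of_nonneg {a : ℝ} (h : 0 ≤ a) : relu a = a := max_eq_right h

lemma relu_zero : relu 0 = 0 := max_self 0

lemma relu_neg_of_nonneg {a : ℝ} (h : 0 ≤ a) : relu (-a) = 0 := max_eq_left (neg_nonpos.2 h)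

lemma relu_sub_relu_neg (a : ℝ) : relu a - relu (-a) = a := by
  simp [relu, max_comm]

lemma Set.ncard_pairs_ne_zero (a b : ℕ) (f : ℕ → ℕ → ℝ) :
    {p : ℕ × ℕ | p.1 < a ∧ p.2 < b ∧ f p.1 p.2 ≠ 0}.ncard =
      ∑ i ∈ Finset.range a, #{j ∈ Finset.range b | f i j ≠ 0} := by
  have : {p : ℕ × ℕ | p.1 < a ∧ p.2 < b ∧ f p.1 p.2 ≠ 0} =
      ↑{p ∈ Finset.range a ×ˢ Finset.range b | f p.1 p.2 ≠ 0} := by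
    ext; simp [and_assoc]
  rw [this, Set.ncard_coe_finset, card_filter, sum_product]
  simp only [card_filter]

lemma Set.ncard_lt_ne_zero (a : ℕ) (f : ℕ → ℝ) :
    {i : ℕ | i < a ∧ f i ≠ 0}.ncard = ∑ i ∈ Finset.range a, if f i ≠ 0 then 1 else 0 := by
  have : {i : ℕ | i < a ∧ f i ≠ 0} = ↑{i ∈ Finset.range a | f i ≠ 0} := by ext; simp
  rw [this, Set.ncard_coe_finset, card_filter]

lemma card_filter_single_ne_zero_le (n g : ℕ) (a : ℝ) :
    #{g' ∈ range n | (Pi.single g a : ℕ → ℝ) g' ≠ 0} ≤ 1 :=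
  (card_le_card fun g' h => by simp_all [Pi.single_apply]).trans (card_singleton g).le

namespace NN

variable (Φ : NN)

section Realization

variable (ρ : ℝ → ℝ) (x : ℕ → ℝ)

lemma hidden_zero (i : ℕ) : Φ.hidden ρ x 0 i = if i < Φ.d then x i else 0 := by
  rw [hidden]

lemma hidden_succ (l i : ℕ) :
    Φ.hidden ρ x (l + 1) i = ρ ((∑ k ∈ range (l + 1), ∑ j ∈ range (Φ.arity k),
      Φ.A (l + 1) k i j * Φ.hidden ρ x k j) + Φ.b (l + 1) i) := by
  rw [hidden]
  dsimp only
  rw [Fin.sum_univ_eq_sum_range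
    (fun k => ∑ j ∈ range (Φ.arity k), Φ.A (l + 1) k i j * Φ.hidden ρ x k j)]

lemma realize_eq (i : ℕ) :
    Φ.realize ρ x i = (∑ k ∈ range Φ.L, ∑ j ∈ range (Φ.arity k),
      Φ.A Φ.L k i j * Φ.hidden ρ x k j) + Φ.b Φ.L i := by
  rw [realize, Fin.sum_univ_eq_sum_range
    (fun k => ∑ j ∈ range (Φ.arity k), Φ.A Φ.L k i j * Φ.hidden ρ x k j)]

lemma hidden_relu_succ_nonneg (l i : ℕ) : 0 ≤ Φ.hidden relu x (l + 1) i := by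
  rw [hidden_succ]; exact relu_nonneg _

variable {Φ}

lemma hidden_succ_of_adjacent (hA : ∀ l k, k + 1 ≠ l → Φ.A l k = 0) (l i : ℕ) :
    Φ.hidden ρ x (l + 1) i = ρ ((∑ j ∈ range (Φ.arity l),
      Φ.A (l + 1) l i j * Φ.hidden ρ x l j) + Φ.b (l + 1) i) := by
  rw [hidden_succ, sum_range_succ, sum_eq_zero, zero_add]
  intro k hk
  simp [hA (l + 1) k (by simp at hk; omega)]

lemma realize_of_adjacent (hA : ∀ l k, k + 1 ≠ l → Φ.A l k = 0) (i : ℕ) :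
    Φ.realize ρ x i = (∑ j ∈ range (Φ.arity (Φ.L - 1)),
      Φ.A Φ.L (Φ.L - 1) i j * Φ.hidden ρ x (Φ.L - 1) j) + Φ.b Φ.L i := by
  obtain ⟨n, hn⟩ : ∃ n, Φ.L = n + 1 := Nat.exists_eq_succ_of_ne_zero Φ.hL.ne'
  rw [realize_eq, hn, sum_range_succ, sum_eq_zero, zero_add, Nat.add_sub_cancel]
  intro k hk
  simp [hA (n + 1) k (by simp at hk; omega)]

end Realization

def fanIn (l i : ℕ) : ℕ :=
  (∑ k ∈ range l, #{j ∈ range (Φ.arity k) | Φ.A l k i j ≠ 0}) + if Φ.b l i ≠ 0 then 1 else 0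

lemma numWeights_eq_sum_fanIn :
    Φ.numWeights = ∑ l ∈ Icc 1 Φ.L, ∑ i ∈ range (Φ.arity l), Φ.fanIn l i := by
  refine sum_congr rfl fun l _ => ?_
  simp only [fanIn, sum_add_distrib, Set.ncard_pairs_ne_zero, Set.ncard_lt_ne_zero]
  rw [sum_comm]

variable {Φ} in
lemma fanIn_of_adjacent (hA : ∀ l k, k + 1 ≠ l → Φ.A l k = 0) {l : ℕ} (hl : 1 ≤ l) (i : ℕ) :
    Φ.fanIn l i = #{j ∈ range (Φ.arity (l - 1)) | Φ.A l (l - 1) i j ≠ 0} +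
      if Φ.b l i ≠ 0 then 1 else 0 := by
  rw [fanIn, sum_eq_single_of_mem (l - 1) (mem_range.2 (by omega))]
  intro k _ hk
  simp [hA l k (by omega)]

def offset (k : ℕ) : ℕ := ∑ m ∈ range k, Φ.arity m

lemma offset_succ (k : ℕ) : Φ.offset (k + 1) = Φ.offset k + Φ.arity k := sum_range_succ _ _

lemma offset_mono : Monotone Φ.offset := fun _ _ h =>
  sum_le_sum_of_subset (range_subset_range.2 h)

lemma arity_le_numNeurons {l : ℕ} (hl : l ≤ Φ.L) : Φ.arity l ≤ Φ.numNeurons :=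
  single_le_sum (fun _ _ => Nat.zero_le _) (mem_range.2 (by omega))

lemma offset_le_numNeurons {k : ℕ} (hk : k ≤ Φ.L + 1) : Φ.offset k ≤ Φ.numNeurons :=
  Φ.offset_mono hk

lemma sum_range_offset {M : Type*} [AddCommMonoid M] (f : ℕ → M) (m : ℕ) :
    ∑ g ∈ range (Φ.offset m), f g =
      ∑ k ∈ range m, ∑ j ∈ range (Φ.arity k), f (Φ.offset k + j) := by
  induction m with
  | zero => simp [offset]
  | succ m ih => rw [offset_succ, sum_range_add, ih, sum_range_succ]

-- Neuron `j` of layer `k` gets the global index `offset k + j`.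
def flatten (l : ℕ) (u : ℕ → ℕ → ℝ) (g : ℕ) : ℝ :=
  ∑ k ∈ range l, if Φ.offset k ≤ g ∧ g < Φ.offset (k + 1) then u k (g - Φ.offset k) else 0

lemma flatten_offset_add {l k j : ℕ} (hk : k < l) (hj : j < Φ.arity k) (u : ℕ → ℕ → ℝ) :
    Φ.flatten l u (Φ.offset k + j) = u k j := by
  rw [flatten, sum_eq_single_of_mem k (mem_range.2 hk),
    if_pos ⟨by omega, by rw [offset_succ]; omega⟩, Nat.add_sub_cancel_left]
  intro k' _ hk'
  rw [if_neg]
  rcases Nat.lt_or_gt_of_ne hk' with h | h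
  · have := Φ.offset_mono (show k' + 1 ≤ k by omega); omega
  · have := Φ.offset_mono (show k + 1 ≤ k' by omega); rw [offset_succ] at this; omega

lemma sum_mul_flatten (l : ℕ) (c : ℕ → ℝ) (u : ℕ → ℕ → ℝ) :
    ∑ g ∈ range (Φ.offset l), c g * Φ.flatten l u g =
      ∑ k ∈ range l, ∑ j ∈ range (Φ.arity k), c (Φ.offset k + j) * u k j := by
  rw [sum_range_offset]
  refine sum_congr rfl fun k hk => sum_congr rfl fun j hj => ?_
  rw [flatten_offset_add Φ (mem_range.1 hk) (mem_range.1 hj)]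

lemma sum_flatten_mul_flatten (l : ℕ) (u w : ℕ → ℕ → ℝ) :
    ∑ g ∈ range (Φ.offset l), Φ.flatten l u g * Φ.flatten l w g =
      ∑ k ∈ range l, ∑ j ∈ range (Φ.arity k), u k j * w k j := by
  rw [sum_mul_flatten]
  refine sum_congr rfl fun k hk => sum_congr rfl fun j hj => ?_
  rw [flatten_offset_add Φ (mem_range.1 hk) (mem_range.1 hj)]

lemma card_flatten_ne_zero (l : ℕ) (u : ℕ → ℕ → ℝ) :
    #{g ∈ range (Φ.offset l) | Φ.flatten l u g ≠ 0} =
      ∑ k ∈ range l, #{j ∈ range (Φ.arity k) | u k j ≠ 0} := by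
  rw [card_filter, sum_range_offset]
  refine sum_congr rfl fun k hk => ?_
  rw [card_filter]
  refine sum_congr rfl fun j hj => ?_
  rw [flatten_offset_add Φ (mem_range.1 hk) (mem_range.1 hj)]

/- The weights on layer `t` of `Φ.toStandard` computing `∑ g, c g * v g`, where `v g` is the value
of the neuron of `Φ` with global index `g`: layer `0` is the input itself, a later layer stores `v g`
as the pair `relu (v g), relu (-v g)` at positions `2 * g, 2 * g + 1`. -/
def readRow (t : ℕ) (c : ℕ → ℝ) (j : ℕ) : ℝ := if t = 0 then c j else (-1) ^ j * c (j / 2)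

def stdWidth (l : ℕ) : ℕ :=
  if l = 0 then Φ.d else if l = Φ.L then Φ.outDim else 2 * Φ.offset (l + 1)

/- On a hidden layer `l`, the pairs with `g < offset l` are copied from layer `l - 1`, the others
belong to layer `l` of `Φ` and are computed afresh; their odd halves are `0` because `v g ≥ 0`. -/
def stdWeight (l i : ℕ) : ℕ → ℝ :=
  if l = Φ.L then readRow (l - 1) (Φ.flatten l fun k => Φ.A l k i)
  else if i / 2 < Φ.offset l then readRow (l - 1) (Pi.single (i / 2) ((-1) ^ i))
  else if i % 2 = 0 then readRow (l - 1) (Φ.flatten l fun k => Φ.A l k (i / 2 - Φ.offset l))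
  else 0

def stdBias (l i : ℕ) : ℝ :=
  if l = Φ.L then Φ.b l i
  else if Φ.offset l ≤ i / 2 ∧ i % 2 = 0 then Φ.b l (i / 2 - Φ.offset l) else 0

def toStandard : NN where
  d := Φ.d
  L := Φ.L
  hL := Φ.hL
  arity := Φ.stdWidth
  harity := if_pos rfl
  A l k := if k + 1 = l then Φ.stdWeight l else 0
  b := Φ.stdBias

lemma toStandard_adjacent : ∀ l k, k + 1 ≠ l → Φ.toStandard.A l k = 0 :=
  fun _ _ h => if_neg h

lemma isStandard_toStandard : Φ.toStandard.IsStandard := by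
  intro l k _ hkl i j _ _
  rw [Φ.toStandard_adjacent l k (by omega)]
  rfl

lemma stdWidth_of_ne {t : ℕ} (ht0 : t ≠ 0) (htL : t ≠ Φ.L) :
    Φ.stdWidth t = 2 * Φ.offset (t + 1) := by
  rw [stdWidth, if_neg ht0, if_neg htL]

lemma stdWidth_L : Φ.stdWidth Φ.L = Φ.arity Φ.L := by
  rw [stdWidth, if_neg Φ.hL.ne', if_pos rfl, outDim]

lemma stdWeight_L (i : ℕ) :
    Φ.stdWeight Φ.L i = readRow (Φ.L - 1) (Φ.flatten Φ.L fun k => Φ.A Φ.L k i) :=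
  if_pos rfl

lemma stdWeight_carry {l g s : ℕ} (hl : l ≠ Φ.L) (hg : g < Φ.offset l) (hs : s < 2) :
    Φ.stdWeight l (2 * g + s) = readRow (l - 1) (Pi.single g ((-1) ^ s)) := by
  have hdiv : (2 * g + s) / 2 = g := by omega
  rw [stdWeight, if_neg hl, hdiv, if_pos hg, pow_add, (even_two_mul g).neg_one_pow, one_mul]

lemma stdWeight_new {l : ℕ} (hl : l ≠ Φ.L) (i : ℕ) :
    Φ.stdWeight l (2 * (Φ.offset l + i)) =
      readRow (l - 1) (Φ.flatten l fun k => Φ.A l k i) := by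
  have hdiv : 2 * (Φ.offset l + i) / 2 = Φ.offset l + i := by omega
  rw [stdWeight, if_neg hl, hdiv, if_neg (by omega), if_pos (by omega), Nat.add_sub_cancel_left]

lemma stdWeight_new_odd {l : ℕ} (hl : l ≠ Φ.L) (i : ℕ) :
    Φ.stdWeight l (2 * (Φ.offset l + i) + 1) = 0 := by
  have hdiv : (2 * (Φ.offset l + i) + 1) / 2 = Φ.offset l + i := by omega
  rw [stdWeight, if_neg hl, hdiv, if_neg (by omega), if_neg (by omega)]

lemma stdBias_carry {l g s : ℕ} (hl : l ≠ Φ.L) (hg : g < Φ.offset l) (hs : s < 2) :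
    Φ.stdBias l (2 * g + s) = 0 := by
  rw [stdBias, if_neg hl, if_neg (by omega)]

lemma stdBias_new {l : ℕ} (hl : l ≠ Φ.L) (i : ℕ) :
    Φ.stdBias l (2 * (Φ.offset l + i)) = Φ.b l i := by
  have hdiv : 2 * (Φ.offset l + i) / 2 = Φ.offset l + i := by omega
  rw [stdBias, if_neg hl, hdiv, if_pos (by omega), Nat.add_sub_cancel_left]

lemma stdBias_new_odd {l : ℕ} (hl : l ≠ Φ.L) (i : ℕ) :
    Φ.stdBias l (2 * (Φ.offset l + i) + 1) = 0 := by
  rw [stdBias, if_neg hl, if_neg (by omega)]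


section Correctness

variable (x : ℕ → ℝ)

lemma toStandard_hidden_succ (t i : ℕ) :
    Φ.toStandard.hidden relu x (t + 1) i = relu ((∑ j ∈ range (Φ.stdWidth t),
      Φ.stdWeight (t + 1) i j * Φ.toStandard.hidden relu x t j) + Φ.stdBias (t + 1) i) := by
  have hA : Φ.toStandard.A (t + 1) t = Φ.stdWeight (t + 1) := if_pos rfl
  rw [hidden_succ_of_adjacent _ _ Φ.toStandard_adjacent, hA]
  rfl

lemma sum_readRow_mul_hidden_zero (c : ℕ → ℝ) :
    ∑ j ∈ range (Φ.stdWidth 0), readRow 0 c j * Φ.toStandard.hidden relu x 0 j =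
      ∑ g ∈ range (Φ.offset 1), c g * Φ.flatten 1 (Φ.hidden relu x) g := by
  rw [sum_mul_flatten, sum_range_one, Φ.harity]
  simp [readRow, stdWidth, offset, hidden_zero, toStandard]

lemma toStandard_hidden_succ_pair {t : ℕ} (ht : t + 1 < Φ.L)
    (hread : ∀ c, ∑ j ∈ range (Φ.stdWidth t), readRow t c j * Φ.toStandard.hidden relu x t j =
      ∑ g ∈ range (Φ.offset (t + 1)), c g * Φ.flatten (t + 1) (Φ.hidden relu x) g)
    {k j s : ℕ} (hk : k ≤ t + 1) (hj : j < Φ.arity k) (hs : s < 2) :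
    Φ.toStandard.hidden relu x (t + 1) (2 * (Φ.offset k + j) + s) =
      relu ((-1) ^ s * Φ.hidden relu x k j) := by
  have hL : t + 1 ≠ Φ.L := ht.ne
  rw [toStandard_hidden_succ]
  rcases (show k ≤ t ∨ k = t + 1 by omega) with hk | rfl
  · have hg : Φ.offset k + j < Φ.offset (t + 1) :=
      lt_of_lt_of_le (by rw [offset_succ]; omega) (Φ.offset_mono (show k + 1 ≤ t + 1 by omega))
    rw [stdWeight_carry Φ hL hg hs, stdBias_carry Φ hL hg hs, add_zero, Nat.add_sub_cancel, hread]
    simp only [Pi.single_apply, ite_mul, zero_mul, sum_ite_eq', mem_range, if_pos hg]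
    rw [flatten_offset_add Φ (by omega) hj]
  · interval_cases s
    · rw [add_zero, stdWeight_new Φ hL, stdBias_new Φ hL, Nat.add_sub_cancel, hread,
        sum_flatten_mul_flatten, pow_zero, one_mul,
        relu_of_nonneg (Φ.hidden_relu_succ_nonneg x t j), hidden_succ]
    · rw [stdWeight_new_odd Φ hL, stdBias_new_odd Φ hL, pow_one, neg_one_mul,
        relu_neg_of_nonneg (Φ.hidden_relu_succ_nonneg x t j)]
      simp only [Pi.zero_apply, zero_mul, sum_const_zero, add_zero, relu_zero]

lemma sum_readRow_mul_hidden_of_pair {t : ℕ} (ht0 : t ≠ 0) (ht : t < Φ.L)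
    (hpair : ∀ k ≤ t, ∀ j < Φ.arity k, ∀ s < 2,
      Φ.toStandard.hidden relu x t (2 * (Φ.offset k + j) + s) =
        relu ((-1) ^ s * Φ.hidden relu x k j))
    (c : ℕ → ℝ) :
    ∑ j ∈ range (Φ.stdWidth t), readRow t c j * Φ.toStandard.hidden relu x t j =
      ∑ g ∈ range (Φ.offset (t + 1)), c g * Φ.flatten (t + 1) (Φ.hidden relu x) g := by
  rw [stdWidth_of_ne Φ ht0 ht.ne, sum_range_two_mul, sum_mul_flatten, sum_range_offset]
  refine sum_congr rfl fun k hk => sum_congr rfl fun j hj => ?_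
  have hk : k ≤ t := by simp at hk; omega
  have hpos := hpair k hk j (mem_range.1 hj) 0 (by norm_num)
  have hneg := hpair k hk j (mem_range.1 hj) 1 (by norm_num)
  rw [add_zero, pow_zero, one_mul] at hpos
  rw [pow_one, neg_one_mul] at hneg
  have hdiv : (2 * (Φ.offset k + j) + 1) / 2 = Φ.offset k + j := by omega
  simp only [readRow, if_neg ht0, hpos, hneg, hdiv, Nat.mul_div_cancel_left _ two_pos,
    (even_two_mul _).neg_one_pow, (odd_two_mul_add_one _).neg_one_pow]
  linear_combination c (Φ.offset k + j) * relu_sub_relu_neg (Φ.hidden relu x k j)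

lemma sum_readRow_mul_hidden {t : ℕ} (ht : t < Φ.L) (c : ℕ → ℝ) :
    ∑ j ∈ range (Φ.stdWidth t), readRow t c j * Φ.toStandard.hidden relu x t j =
      ∑ g ∈ range (Φ.offset (t + 1)), c g * Φ.flatten (t + 1) (Φ.hidden relu x) g := by
  induction t generalizing c with
  | zero => exact Φ.sum_readRow_mul_hidden_zero x c
  | succ t ih =>
    exact Φ.sum_readRow_mul_hidden_of_pair x t.succ_ne_zero ht
      (fun k hk j hj s hs => Φ.toStandard_hidden_succ_pair x ht (ih (by omega)) hk hj hs) c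

lemma realize_toStandard (i : ℕ) : Φ.toStandard.realize relu x i = Φ.realize relu x i := by
  have hA : Φ.toStandard.A Φ.L (Φ.L - 1) = Φ.stdWeight Φ.L := if_pos (Nat.sub_add_cancel Φ.hL)
  have hb : Φ.toStandard.b Φ.L i = Φ.b Φ.L i := if_pos rfl
  rw [realize_of_adjacent _ _ Φ.toStandard_adjacent]
  change (∑ j ∈ range (Φ.stdWidth (Φ.L - 1)), Φ.toStandard.A Φ.L (Φ.L - 1) i j *
    Φ.toStandard.hidden relu x (Φ.L - 1) j) + Φ.toStandard.b Φ.L i = _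
  rw [hA, hb, stdWeight_L, sum_readRow_mul_hidden Φ x (by have := Φ.hL; omega),
    Nat.sub_add_cancel Φ.hL, sum_flatten_mul_flatten, realize_eq]

end Correctness

lemma card_readRow_ne_zero_le {t : ℕ} (ht : t < Φ.L) (c : ℕ → ℝ) :
    #{j ∈ range (Φ.stdWidth t) | readRow t c j ≠ 0} ≤
      2 * #{g ∈ range (Φ.offset (t + 1)) | c g ≠ 0} := by
  rcases Nat.eq_zero_or_pos t with rfl | ht0
  · have : Φ.stdWidth 0 = Φ.offset 1 := by simp [stdWidth, offset, Φ.harity]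
    simp only [this, readRow, if_true, zero_add]
    omega
  · rw [stdWidth_of_ne Φ ht0.ne' ht.ne, card_filter, card_filter, sum_range_two_mul, mul_sum]
    refine le_of_eq (sum_congr rfl fun g _ => ?_)
    have hdiv : (2 * g + 1) / 2 = g := by omega
    simp only [readRow, if_neg ht0.ne', Nat.mul_div_cancel_left g two_pos, hdiv,
      (even_two_mul g).neg_one_pow, (odd_two_mul_add_one g).neg_one_pow, one_mul, neg_one_mul,
      neg_ne_zero]
    split_ifs <;> rfl

lemma fanIn_toStandard {l : ℕ} (hl : 1 ≤ l) (i : ℕ) :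
    Φ.toStandard.fanIn l i = #{j ∈ range (Φ.stdWidth (l - 1)) | Φ.stdWeight l i j ≠ 0} +
      if Φ.stdBias l i ≠ 0 then 1 else 0 := by
  have hA : Φ.toStandard.A l (l - 1) = Φ.stdWeight l := if_pos (Nat.sub_add_cancel hl)
  rw [fanIn_of_adjacent Φ.toStandard_adjacent hl, hA]
  rfl

lemma fanIn_toStandard_L (i : ℕ) : Φ.toStandard.fanIn Φ.L i ≤ 2 * Φ.fanIn Φ.L i := by
  have hL := Φ.hL
  have hb : Φ.stdBias Φ.L i = Φ.b Φ.L i := if_pos rfl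
  have hrow := Φ.card_readRow_ne_zero_le (t := Φ.L - 1) (by omega)
    (Φ.flatten Φ.L fun k => Φ.A Φ.L k i)
  rw [Nat.sub_add_cancel hL, card_flatten_ne_zero] at hrow
  rw [fanIn_toStandard Φ hL, stdWeight_L, hb, fanIn]
  split_ifs <;> omega

lemma fanIn_toStandard_carry {l g s : ℕ} (hl : 1 ≤ l) (hlL : l < Φ.L) (hg : g < Φ.offset l)
    (hs : s < 2) : Φ.toStandard.fanIn l (2 * g + s) ≤ 2 := by
  have hrow := Φ.card_readRow_ne_zero_le (t := l - 1) (by omega) (Pi.single g ((-1) ^ s))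
  have hsingle := card_filter_single_ne_zero_le (Φ.offset (l - 1 + 1)) g ((-1) ^ s)
  rw [fanIn_toStandard Φ hl, stdWeight_carry Φ hlL.ne hg hs, stdBias_carry Φ hlL.ne hg hs,
    if_neg (not_not_intro rfl)]
  omega

lemma fanIn_toStandard_new {l : ℕ} (hl : 1 ≤ l) (hlL : l < Φ.L) (i : ℕ) :
    Φ.toStandard.fanIn l (2 * (Φ.offset l + i)) ≤ 2 * Φ.fanIn l i := by
  have hrow := Φ.card_readRow_ne_zero_le (t := l - 1) (by omega)
    (Φ.flatten l fun k => Φ.A l k i)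
  rw [Nat.sub_add_cancel hl, card_flatten_ne_zero] at hrow
  rw [fanIn_toStandard Φ hl, stdWeight_new Φ hlL.ne, stdBias_new Φ hlL.ne, fanIn]
  split_ifs <;> omega

lemma fanIn_toStandard_new_odd {l : ℕ} (hl : 1 ≤ l) (hlL : l < Φ.L) (i : ℕ) :
    Φ.toStandard.fanIn l (2 * (Φ.offset l + i) + 1) = 0 := by
  rw [fanIn_toStandard Φ hl, stdWeight_new_odd Φ hlL.ne, stdBias_new_odd Φ hlL.ne]
  simp

lemma sum_fanIn_toStandard_le {l : ℕ} (hl : 1 ≤ l) (hlL : l ≤ Φ.L) :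
    ∑ i ∈ range (Φ.stdWidth l), Φ.toStandard.fanIn l i ≤
      4 * Φ.numNeurons + 2 * ∑ i ∈ range (Φ.arity l), Φ.fanIn l i := by
  rcases hlL.eq_or_lt with rfl | hlL
  · rw [stdWidth_L, mul_sum]
    exact le_add_left (sum_le_sum fun i _ => Φ.fanIn_toStandard_L i)
  rw [stdWidth_of_ne Φ (by omega) hlL.ne, offset_succ, sum_range_two_mul, sum_range_add, mul_sum]
  gcongr ?_ + ?_
  · calc ∑ g ∈ range (Φ.offset l),
          (Φ.toStandard.fanIn l (2 * g) + Φ.toStandard.fanIn l (2 * g + 1))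
        ≤ ∑ g ∈ range (Φ.offset l), 4 := sum_le_sum fun g hg =>
          add_le_add (Φ.fanIn_toStandard_carry hl hlL (mem_range.1 hg) two_pos)
            (Φ.fanIn_toStandard_carry hl hlL (mem_range.1 hg) one_lt_two)
      _ ≤ 4 * Φ.numNeurons := by
          rw [sum_const, card_range, smul_eq_mul, mul_comm]
          exact Nat.mul_le_mul_left 4 (Φ.offset_le_numNeurons (by omega))
  · refine sum_le_sum fun i _ => ?_
    rw [Φ.fanIn_toStandard_new_odd hl hlL, add_zero]
    exact Φ.fanIn_toStandard_new hl hlL i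

lemma numWeights_toStandard_le :
    Φ.toStandard.numWeights ≤ 4 * (Φ.L * Φ.numNeurons) + 2 * Φ.numWeights := by
  rw [numWeights_eq_sum_fanIn, numWeights_eq_sum_fanIn]
  calc ∑ l ∈ Icc 1 Φ.L, ∑ i ∈ range (Φ.stdWidth l), Φ.toStandard.fanIn l i
      ≤ ∑ l ∈ Icc 1 Φ.L, (4 * Φ.numNeurons + 2 * ∑ i ∈ range (Φ.arity l), Φ.fanIn l i) :=
        sum_le_sum fun l hl => Φ.sum_fanIn_toStandard_le (mem_Icc.1 hl).1 (mem_Icc.1 hl).2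
    _ = 4 * (Φ.L * Φ.numNeurons) + 2 * ∑ l ∈ Icc 1 Φ.L, ∑ i ∈ range (Φ.arity l), Φ.fanIn l i := by
        rw [sum_add_distrib, sum_const, Nat.card_Icc, smul_eq_mul, Nat.add_sub_cancel, mul_sum,
          mul_left_comm]

lemma stdWidth_le_numNeurons {l : ℕ} (hl : l ≤ Φ.L) : Φ.stdWidth l ≤ 2 * Φ.numNeurons := by
  have h0 := Φ.arity_le_numNeurons (Nat.zero_le Φ.L)
  have hL := Φ.arity_le_numNeurons le_rfl
  have hoff := Φ.offset_le_numNeurons (show l + 1 ≤ Φ.L + 1 by omega)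
  rw [Φ.harity] at h0
  unfold stdWidth outDim
  split_ifs <;> omega

lemma numNeurons_toStandard_le : Φ.toStandard.numNeurons ≤ 4 * Φ.L * Φ.numNeurons :=
  calc ∑ l ∈ range (Φ.L + 1), Φ.stdWidth l
      ≤ ∑ l ∈ range (Φ.L + 1), 2 * Φ.numNeurons :=
        sum_le_sum fun l hl => Φ.stdWidth_le_numNeurons (by simp at hl; omega)
    _ ≤ 4 * Φ.L * Φ.numNeurons := by
        rw [sum_const, card_range, smul_eq_mul]
        have := Φ.hL
        nlinarith

end NN

/-- **Conversion to standard networks.**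
There are absolute constants `C₁, C₂ > 0` such that every ReLU network `Φ` can be
realized by a standard network `Φst` with the same input dimension and number of layers,
at most `C₁·L·N` neurons and at most `C₂·(L·N + M)` nonzero weights. -/
theorem network_to_standard_network :
    ∃ C₁ C₂ : ℝ, 0 < C₁ ∧ 0 < C₂ ∧
      ∀ Φ : NN, ∃ Φst : NN, Φst.IsStandard ∧ Φst.d = Φ.d ∧ Φst.L = Φ.L ∧
        Φst.outDim = Φ.outDim ∧
        (Φst.numNeurons : ℝ) ≤ C₁ * Φ.L * Φ.numNeurons ∧
        (Φst.numWeights : ℝ) ≤ C₂ * (Φ.L * Φ.numNeurons + Φ.numWeights) ∧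
        ∀ x : ℕ → ℝ, ∀ i < Φ.outDim, Φst.realize relu x i = Φ.realize relu x i := by
  refine ⟨4, 4, by norm_num, by norm_num, fun Φ => ⟨Φ.toStandard, Φ.isStandard_toStandard,
    rfl, rfl, Φ.stdWidth_L, ?_, ?_, fun x i _ => Φ.realize_toStandard x i⟩⟩
  · exact_mod_cast Φ.numNeurons_toStandard_le
  · have := Φ.numWeights_toStandard_le
    exact_mod_cast (by omega : Φ.toStandard.numWeights ≤ 4 * (Φ.L * Φ.numNeurons + Φ.numWeights))

end
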